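/- arXiv:1406.4552 — 4 statements merged into one kernel-verified Lean document; each statement's English description precedes it below -/
import Mathlib

section
/- Let θ₀ > 0 and let Y = ℝ²/G be the quotient of ℝ² (usual topology) by the group G generated by the boost H_{θ₀}, with the quotient topology. Then Y is a T0 space but not a T1 space. -/
/-- The hyperbolic rotation (boost) with rapidity θ acting on ℝ². -/
noncomputable def boost (θ : ℝ) (p : ℝ × ℝ) : ℝ × ℝ :=
  (p.1 * Real.cosh θ + p.2 * Real.sinh θ, p.1 * Real.sinh θ + p.2 * Real.cosh θ)

/-- Two points of ℝ² are related iff one is the image of the other under some iterate of the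
boost H_{θ₀}. -/
def boostRel (θ₀ : ℝ) (p q : ℝ × ℝ) : Prop := ∃ n : ℤ, q = boost (n * θ₀) p

/-!
In light-cone coordinates u = x + y, v = x - y the boost H_θ is (u, v) ↦ (e^θ u, e^{-θ} v).
If two classes cannot be told apart by open sets, they agree on every continuous invariant, even
on one defined only on an invariant open set: on uv, and, where u ≠ 0, on the sign of u and on
log |u| modulo θ₀ (likewise for v). These invariants pin down the orbit, so the quotient is T0.
It is not T1: the points e^{-nθ₀}(1, 1) of the orbit of (1, 1) tend to the origin, so the class
of the origin lies in the closure of the class of (1, 1).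
-/
open Real Filter Topology

section QuotientTopology

variable {X : Type*} [TopologicalSpace X] {r : X → X → Prop} {p q : X}

theorem mem_iff_mem_of_inseparable_quot_mk {U : Set X} (hU : IsOpen U)
    (hU_inv : ∀ a b, r a b → (a ∈ U ↔ b ∈ U))
    (h : Inseparable (Quot.mk r p) (Quot.mk r q)) : p ∈ U ↔ q ∈ U := by
  let S : Set (Quot r) := {z | Quot.lift (· ∈ U) (fun a b hab => propext (hU_inv a b hab)) z}
  have hS : IsOpen S := isOpen_coinduced.2 hU
  exact inseparable_iff_forall_isOpen.1 h S hS

theorem eq_of_inseparable_quot_mk {Z : Type*} [TopologicalSpace Z] [T0Space Z]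
    {U : Set X} (hU : IsOpen U) (hU_inv : ∀ a b, r a b → (a ∈ U ↔ b ∈ U))
    {f : X → Z} (hf : ContinuousOn f U) (hf_inv : ∀ a b, r a b → a ∈ U → f a = f b)
    (hp : p ∈ U) (h : Inseparable (Quot.mk r p) (Quot.mk r q)) : f p = f q := by
  have hq : q ∈ U := (mem_iff_mem_of_inseparable_quot_mk hU hU_inv h).1 hp
  refine (inseparable_iff_forall_isOpen.2 fun V hV => ?_).eq
  have hUV_inv : ∀ a b, r a b → (a ∈ U ∩ f ⁻¹' V ↔ b ∈ U ∩ f ⁻¹' V) := by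
    intro a b hab
    by_cases ha : a ∈ U
    · simp only [Set.mem_inter_iff, Set.mem_preimage, ha, hf_inv a b hab ha,
        (hU_inv a b hab).1 ha, true_and]
    · simp only [Set.mem_inter_iff, ha, (hU_inv a b hab).not.1 ha, false_and]
  have := mem_iff_mem_of_inseparable_quot_mk (hf.isOpen_inter_preimage hU hV) hUV_inv h
  simpa [hp, hq] using this

theorem Quot.mk_specializes_of_tendsto {x : ℕ → X} {y z : X} (hx : Tendsto x atTop (𝓝 y))
    (hxz : ∀ n, Quot.mk r (x n) = Quot.mk r z) : Quot.mk r z ⤳ Quot.mk r y :=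
  specializes_iff_mem_closure.2 <|
    mem_closure_of_tendsto ((continuous_quot_mk.tendsto y).comp hx) (Eventually.of_forall hxz)

end QuotientTopology

theorem eq_exp_mul_of_log_eq {x y t : ℝ} (hxy : 0 < y * x) (h : log y = t + log x) :
    y = exp t * x := by
  have hx : x ≠ 0 := by rintro rfl; simp at hxy
  have hy : y ≠ 0 := by rintro rfl; simp at hxy
  have hdiv : 0 < y / x := by
    rw [show y / x = y * x / x ^ 2 by field_simp]
    exact div_pos hxy (by positivity)
  have : y / x = exp t := by rw [← exp_log hdiv, log_div hy hx, h, add_sub_cancel_right]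
  rwa [div_eq_iff hx] at this

theorem exp_mul_exp_neg (t : ℝ) : exp t * exp (-t) = 1 := by
  rw [← exp_add, add_neg_cancel, exp_zero]

section Boost

variable {θ₀ : ℝ}

theorem boost_fst_add_snd (θ : ℝ) (p : ℝ × ℝ) :
    (boost θ p).1 + (boost θ p).2 = exp θ * (p.1 + p.2) := by
  simp only [boost, ← cosh_add_sinh]; ring

theorem boost_fst_sub_snd (θ : ℝ) (p : ℝ × ℝ) :
    (boost θ p).1 - (boost θ p).2 = exp (-θ) * (p.1 - p.2) := by
  simp only [boost, ← cosh_sub_sinh]; ring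

theorem eq_boost_iff {θ : ℝ} {p q : ℝ × ℝ} :
    q = boost θ p ↔ q.1 + q.2 = exp θ * (p.1 + p.2) ∧ q.1 - q.2 = exp (-θ) * (p.1 - p.2) := by
  refine ⟨by rintro rfl; exact ⟨boost_fst_add_snd θ p, boost_fst_sub_snd θ p⟩, fun ⟨hu, hv⟩ => ?_⟩
  rw [← boost_fst_add_snd] at hu
  rw [← boost_fst_sub_snd] at hv
  exact Prod.ext (by linear_combination (hu + hv) / 2) (by linear_combination (hu - hv) / 2)

theorem boost_diag (θ a : ℝ) : boost θ (a, a) = (exp θ * a, exp θ * a) := by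
  simp only [boost, ← cosh_add_sinh]; ext <;> ring

namespace boostRel

variable {a b : ℝ × ℝ}

theorem exists_fst_add_snd (h : boostRel θ₀ a b) :
    ∃ k : ℤ, b.1 + b.2 = exp (k * θ₀) * (a.1 + a.2) := by
  obtain ⟨n, rfl⟩ := h
  exact ⟨n, boost_fst_add_snd _ a⟩

theorem exists_fst_sub_snd (h : boostRel θ₀ a b) :
    ∃ k : ℤ, b.1 - b.2 = exp (k * θ₀) * (a.1 - a.2) := by
  obtain ⟨n, rfl⟩ := h
  exact ⟨-n, by rw [boost_fst_sub_snd]; push_cast; ring_nf⟩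

theorem add_mul_sub_eq (h : boostRel θ₀ a b) :
    (b.1 + b.2) * (b.1 - b.2) = (a.1 + a.2) * (a.1 - a.2) := by
  obtain ⟨n, rfl⟩ := h
  rw [boost_fst_add_snd, boost_fst_sub_snd, mul_mul_mul_comm, exp_mul_exp_neg, one_mul]

end boostRel

variable {p q : ℝ × ℝ}

theorem exists_eq_exp_mul_of_inseparable {g : ℝ × ℝ → ℝ} (hg : Continuous g)
    (hg_inv : ∀ a b, boostRel θ₀ a b → ∃ k : ℤ, g b = exp (k * θ₀) * g a) (hp : g p ≠ 0)
    (h : Inseparable (Quot.mk (boostRel θ₀) p) (Quot.mk (boostRel θ₀) q)) :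
    ∃ n : ℤ, g q = exp (n * θ₀) * g p := by
  set U := {w | 0 < g w * g p}
  have hU : IsOpen U := isOpen_lt continuous_const (hg.mul continuous_const)
  have hU_inv : ∀ a b, boostRel θ₀ a b → (a ∈ U ↔ b ∈ U) := by
    intro a b hab
    obtain ⟨k, hk⟩ := hg_inv a b hab
    simp only [U, Set.mem_ofPred_eq, hk, mul_assoc, mul_pos_iff_of_pos_left (exp_pos _)]
  have hpU : p ∈ U := mul_self_pos.2 hp
  have hqU : q ∈ U := (mem_iff_mem_of_inseparable_quot_mk hU hU_inv h).1 hpU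
  have hlog : (log (g p) : AddCircle θ₀) = log (g q) := by
    refine eq_of_inseparable_quot_mk hU hU_inv (f := fun w => ((log (g w) : ℝ) : AddCircle θ₀))
      ?_ ?_ hpU h
    · refine (AddCircle.continuous_mk' θ₀).comp_continuousOn
        (continuousOn_log.comp hg.continuousOn fun w hw => ?_)
      rintro (hw0 : g w = 0)
      simp [U, hw0] at hw
    · intro a b hab ha
      obtain ⟨k, hk⟩ := hg_inv a b hab
      have ha0 : g a ≠ 0 := by rintro ha0; simp [U, ha0] at ha
      refine QuotientAddGroup.eq.2 (AddSubgroup.mem_zmultiples_iff.2 ⟨k, ?_⟩)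
      rw [hk, log_mul (exp_pos _).ne' ha0, log_exp, zsmul_eq_mul]
      ring
  obtain ⟨n, hn⟩ := AddSubgroup.mem_zmultiples_iff.1 (QuotientAddGroup.eq.1 hlog)
  exact ⟨n, eq_exp_mul_of_log_eq hqU (by rw [zsmul_eq_mul] at hn; linarith)⟩

theorem eq_zero_of_inseparable {g : ℝ × ℝ → ℝ} (hg : Continuous g)
    (hg_inv : ∀ a b, boostRel θ₀ a b → ∃ k : ℤ, g b = exp (k * θ₀) * g a) (hp : g p = 0)
    (h : Inseparable (Quot.mk (boostRel θ₀) p) (Quot.mk (boostRel θ₀) q)) : g q = 0 := by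
  by_contra hq
  obtain ⟨n, hn⟩ := exists_eq_exp_mul_of_inseparable hg hg_inv hq h.symm
  simp [hp, hq] at hn

theorem boostRel_of_inseparable
    (h : Inseparable (Quot.mk (boostRel θ₀) p) (Quot.mk (boostRel θ₀) q)) : boostRel θ₀ p q := by
  have hprod : (q.1 + q.2) * (q.1 - q.2) = (p.1 + p.2) * (p.1 - p.2) :=
    (eq_of_inseparable_quot_mk isOpen_univ (by simp) (f := fun w => (w.1 + w.2) * (w.1 - w.2))
      (by fun_prop) (fun a b hab _ => hab.add_mul_sub_eq.symm) trivial h).symm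
  obtain hu | hu := ne_or_eq (p.1 + p.2) 0
  · obtain ⟨n, hn⟩ := exists_eq_exp_mul_of_inseparable (g := fun w => w.1 + w.2) (by fun_prop)
      (fun a b hab => hab.exists_fst_add_snd) hu h
    refine ⟨n, eq_boost_iff.2 ⟨hn, mul_left_cancel₀ (mul_ne_zero (exp_pos (n * θ₀)).ne' hu) ?_⟩⟩
    linear_combination
      hprod - (q.1 - q.2) * hn - (p.1 + p.2) * (p.1 - p.2) * exp_mul_exp_neg (n * θ₀)
  obtain hv | hv := ne_or_eq (p.1 - p.2) 0
  · obtain ⟨n, hn⟩ := exists_eq_exp_mul_of_inseparable (g := fun w => w.1 - w.2) (by fun_prop)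
      (fun a b hab => hab.exists_fst_sub_snd) hv h
    refine ⟨-n, eq_boost_iff.2 ?_⟩
    rw [Int.cast_neg, neg_mul, neg_neg]
    refine ⟨mul_left_cancel₀ (mul_ne_zero (exp_pos (n * θ₀)).ne' hv) ?_, hn⟩
    linear_combination
      hprod - (q.1 + q.2) * hn - (p.1 + p.2) * (p.1 - p.2) * exp_mul_exp_neg (n * θ₀)
  have hqu := eq_zero_of_inseparable (g := fun w => w.1 + w.2) (by fun_prop)
    (fun a b hab => hab.exists_fst_add_snd) hu h
  have hqv := eq_zero_of_inseparable (g := fun w => w.1 - w.2) (by fun_prop)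
    (fun a b hab => hab.exists_fst_sub_snd) hv h
  exact ⟨0, eq_boost_iff.2 (by simp [hu, hv, hqu, hqv])⟩

theorem mk_one_one_specializes_mk_zero (hθ₀ : 0 < θ₀) :
    Quot.mk (boostRel θ₀) (1, 1) ⤳ Quot.mk (boostRel θ₀) 0 := by
  refine Quot.mk_specializes_of_tendsto (x := fun n : ℕ => boost ((-n : ℤ) * θ₀) (1, 1)) ?_
    fun n => (Quot.sound ⟨-n, rfl⟩).symm
  have hexp : Tendsto (fun n : ℕ => exp ((-n : ℤ) * θ₀)) atTop (𝓝 0) := by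
    simp only [Int.cast_neg, Int.cast_natCast, neg_mul]
    exact tendsto_exp_atBot.comp
      (tendsto_neg_atTop_atBot.comp (tendsto_natCast_atTop_atTop.atTop_mul_const hθ₀))
  simp only [boost_diag, mul_one]
  exact hexp.prodMk_nhds hexp

end Boost

theorem quotient_plane_T0_not_T1 (θ₀ : ℝ) (hθ₀ : 0 < θ₀) :
    T0Space (Quot (boostRel θ₀)) ∧ ¬ T1Space (Quot (boostRel θ₀)) := by
  refine ⟨(t0Space_iff_inseparable _).2 fun x y h => ?_, fun _ => ?_⟩
  · induction x using Quot.inductionOn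
    induction y using Quot.inductionOn
    exact Quot.sound (boostRel_of_inseparable h)
  · obtain ⟨n, hn⟩ :=
      boostRel_of_inseparable (Inseparable.of_eq (mk_one_one_specializes_mk_zero hθ₀).eq)
    rw [boost_diag, mul_one] at hn
    exact (exp_pos _).ne (congrArg Prod.fst hn)
end

section
/- Let θ₀ > 0, let S⁺ = {(T,X) ∈ ℝ² : T < X}, and let G be the group generated by H_{θ₀}. Then the quotient S⁺/G with the quotient topology is Hausdorff. -/
/-- The open half-plane S⁺ = {T < X} with the subspace topology. -/
def HalfPlane : Type := {p : ℝ × ℝ // p.1 < p.2}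

instance : TopologicalSpace HalfPlane := instTopologicalSpaceSubtype

/-- Two points of S⁺ are related iff one is the image of the other under an iterate of the
boost H_{θ₀}. -/
def boostRelS (θ₀ : ℝ) (p q : HalfPlane) : Prop := ∃ n : ℤ, q.val = boost (n * θ₀) p.val

/-!
In light-cone coordinates `u = X - T > 0`, `v = X + T`, the boost `H_θ` acts by
`u ↦ e^{-θ} u`, `v ↦ e^{θ} v`. Hence `u v = X² - T²` together with `log u` modulo `θ₀` is a
continuous complete invariant of the orbits of `H_{θ₀}`; it induces a continuous injection of
`S⁺/G` into the Hausdorff space `ℝ × ℝ/θ₀ℤ`.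
-/

open Real

theorem Quot.t2Space_of_continuous_of_eq_iff {X Y : Type*} [TopologicalSpace X]
    [TopologicalSpace Y] [T2Space Y] {r : X → X → Prop} {f : X → Y} (hf : Continuous f)
    (hr : ∀ a b, f a = f b ↔ r a b) : T2Space (Quot r) := by
  refine T2Space.of_injective_continuous (f := Quot.lift f fun a b h => (hr a b).2 h) ?_
    (continuous_quot_lift _ hf)
  rintro ⟨a⟩ ⟨b⟩ h
  exact Quot.sound ((hr a b).1 h)

theorem AddCircle.coe_log_eq_coe_log_iff {θ₀ u u' : ℝ} (hu : 0 < u) (hu' : 0 < u') :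
    ((log u : ℝ) : AddCircle θ₀) = (log u' : ℝ) ↔ ∃ n : ℤ, u' = u * exp (-(n * θ₀)) := by
  rw [QuotientAddGroup.eq, AddSubgroup.mem_zmultiples_iff]
  constructor
  · rintro ⟨k, hk⟩
    refine ⟨-k, ?_⟩
    rw [← exp_log hu', ← exp_log hu, ← exp_add]
    congr 1
    rw [zsmul_eq_mul] at hk
    push_cast
    linarith
  · rintro ⟨n, rfl⟩
    refine ⟨-n, ?_⟩
    rw [log_mul hu.ne' (exp_ne_zero _), log_exp, zsmul_eq_mul]
    push_cast
    ring

theorem boost_eq_iff {θ : ℝ} {p q : ℝ × ℝ} :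
    q = boost θ p ↔ q.2 - q.1 = (p.2 - p.1) * exp (-θ) ∧ q.2 + q.1 = (p.2 + p.1) * exp θ := by
  have hexp := cosh_add_sinh θ
  have hexp_neg := cosh_sub_sinh θ
  constructor
  · rintro rfl
    simp only [boost]
    constructor
    · linear_combination (p.2 - p.1) * hexp_neg
    · linear_combination (p.2 + p.1) * hexp
  · rintro ⟨hu, hv⟩
    ext <;> simp only [boost]
    · linear_combination (hv - hu - (p.2 + p.1) * hexp + (p.2 - p.1) * hexp_neg) / 2
    · linear_combination (hv + hu - (p.2 + p.1) * hexp - (p.2 - p.1) * hexp_neg) / 2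

namespace HalfPlane

variable (θ₀ : ℝ)

noncomputable def boostInvariant (p : HalfPlane) : ℝ × AddCircle θ₀ :=
  ((p.val.2 - p.val.1) * (p.val.2 + p.val.1), (log (p.val.2 - p.val.1) : AddCircle θ₀))

theorem continuous_boostInvariant : Continuous (boostInvariant θ₀) := by
  have hval : Continuous fun p : HalfPlane => p.val := continuous_subtype_val
  have hlog : Continuous fun p : HalfPlane => log (p.val.2 - p.val.1) :=
    Continuous.log (by fun_prop) fun p => (sub_pos.2 p.2).ne'
  exact Continuous.prodMk (by fun_prop) (continuous_quotient_mk'.comp hlog)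

theorem boostInvariant_eq_iff {p q : HalfPlane} :
    boostInvariant θ₀ p = boostInvariant θ₀ q ↔ boostRelS θ₀ p q := by
  have hup : 0 < p.val.2 - p.val.1 := sub_pos.2 p.2
  have huq : 0 < q.val.2 - q.val.1 := sub_pos.2 q.2
  simp only [boostInvariant, Prod.mk.injEq, AddCircle.coe_log_eq_coe_log_iff hup huq, boostRelS,
    boost_eq_iff]
  have hexp (n : ℤ) : exp (-(n * θ₀)) * exp (n * θ₀) = 1 := by
    rw [← exp_add, neg_add_cancel, exp_zero]
  constructor
  · rintro ⟨hprod, n, hu⟩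
    refine ⟨n, hu, mul_left_cancel₀ (mul_ne_zero hup.ne' (exp_ne_zero (-(n * θ₀)))) ?_⟩
    linear_combination -(q.val.2 + q.val.1) * hu - hprod
      - (p.val.2 - p.val.1) * (p.val.2 + p.val.1) * hexp n
  · rintro ⟨n, hu, hv⟩
    refine ⟨?_, n, hu⟩
    rw [hu, hv]
    linear_combination -(p.val.2 - p.val.1) * (p.val.2 + p.val.1) * hexp n

end HalfPlane

theorem quotient_half_plane_hausdorff_general (θ₀ : ℝ) :
    T2Space (Quot (boostRelS θ₀)) :=
  Quot.t2Space_of_continuous_of_eq_iff (HalfPlane.continuous_boostInvariant θ₀)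
    fun _ _ => HalfPlane.boostInvariant_eq_iff θ₀

theorem quotient_half_plane_hausdorff (θ₀ : ℝ) (hθ₀ : 0 < θ₀) :
    T2Space (Quot (boostRelS θ₀)) :=
  quotient_half_plane_hausdorff_general θ₀
end

section
/- Let (p,v) and (p',v') be incomplete geodesic data in Q₄ with exit parameters φ = φ(p,v) and φ' = φ(p',v'), hitting the same side ε' of the boundary (or with ξ(p,v)=0). If each coordinate of p' and v' differs from that of p and v by less than δ, where 2δ < |ε'v_x - v_t|, then |φ' - φ| ≤ 2δ(1 + φ)/(|ε'v_x - v_t| - 2δ). -/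
/-- The open upper quadrant Q₄ = {(t,x) : t > |x|} of Minkowski ℝ². -/
def Quad : Set (ℝ × ℝ) := {p | |p.2| < p.1}

/-- The hit-side sign ε of incomplete geodesic data (p,v). -/
noncomputable def hitSign (p v : ℝ × ℝ) : ℝ := Real.sign (p.1 * v.2 - p.2 * v.1)

/-- The forward exit parameter φ of incomplete geodesic data (p,v). -/
noncomputable def exitTime (p v : ℝ × ℝ) : ℝ :=
  (p.1 - hitSign p v * p.2) / (hitSign p v * v.2 - v.1)

/-- The x-coordinate ξ of the exit point of incomplete geodesic data (p,v). -/
noncomputable def exitCoord (p v : ℝ × ℝ) : ℝ :=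
  (p.1 * v.2 - p.2 * v.1) / (hitSign p v * v.2 - v.1)

/-! The exit time is the quotient `N / D` of two expressions that are affine in the side sign
`ε'` and in the coordinates of `p` and `v`, so a `δ`-perturbation moves each of them by at most
`2δ`; a first-order estimate for quotients then gives the bound. When `ε'` is not the hit side of
`(p, v)`, the point `p` and the velocity `v` are parallel (`ξ = 0`) and `N / D` does not depend on
the sign at all. -/

open Filter Topology

lemma abs_div_sub_div_le {N D N' D' η : ℝ} (hN : 0 ≤ N) (hηD : η < D)
    (hN' : |N' - N| ≤ η) (hD' : |D' - D| ≤ η) :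
    |N' / D' - N / D| ≤ η * (1 + N / D) / (D - η) := by
  have hη : 0 ≤ η := (abs_nonneg _).trans hN'
  have hD : 0 < D := hη.trans_lt hηD
  have hD'_ge : D - η ≤ D' := by linarith [(abs_le.mp hD').1]
  have hD'_pos : 0 < D' := by linarith
  have hφ : 0 ≤ N / D := div_nonneg hN hD.le
  have hdiff : N' / D' - N / D = ((N' - N) - N / D * (D' - D)) / D' := by
    field_simp
    ring
  rw [hdiff, abs_div, abs_of_pos hD'_pos]
  refine div_le_div₀ (by positivity) ?_ (by linarith) hD'_ge
  calc |(N' - N) - N / D * (D' - D)| ≤ |N' - N| + |N / D * (D' - D)| := abs_sub _ _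
    _ = |N' - N| + N / D * |D' - D| := by rw [abs_mul, abs_of_nonneg hφ]
    _ ≤ η + N / D * η := by gcongr
    _ = η * (1 + N / D) := by ring

lemma abs_sub_mul_sub_le {a b a' b' e δ : ℝ} (he : |e| ≤ 1)
    (ha : |a - a'| < δ) (hb : |b - b'| < δ) :
    |(a' - e * b') - (a - e * b)| ≤ 2 * δ := by
  have heb : |e * (b' - b)| ≤ δ := by
    rw [abs_mul, abs_sub_comm]
    nlinarith [abs_nonneg e, abs_nonneg (b - b')]
  calc |(a' - e * b') - (a - e * b)| = |(a' - a) - e * (b' - b)| := by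
        congr 1; ring
    _ ≤ |a' - a| + |e * (b' - b)| := abs_sub _ _
    _ ≤ 2 * δ := by rw [abs_sub_comm]; linarith

lemma abs_hitSign_le_one (p v : ℝ × ℝ) : |hitSign p v| ≤ 1 := by
  rcases Real.sign_apply_eq (p.1 * v.2 - p.2 * v.1) with h | h | h <;>
    simp [hitSign, h]

lemma mem_closure_quad_of_abs_le {v : ℝ × ℝ} (hv : |v.2| ≤ v.1) : v ∈ closure Quad := by
  have hlim : Tendsto (fun s : ℝ => (v.1 + s, v.2)) (𝓝[>] 0) (𝓝 v) :=
    (((continuous_const.add continuous_id).prodMk continuous_const).tendsto' 0 v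
      (by simp)).mono_left nhdsWithin_le_nhds
  refine mem_closure_of_tendsto hlim (eventually_nhdsWithin_of_forall fun s hs => ?_)
  change |v.2| < v.1 + s
  linarith [Set.mem_Ioi.mp hs]

lemma fst_lt_abs_snd_of_notMem_closure_quad {v : ℝ × ℝ} (hv : v ∉ closure Quad) :
    v.1 < |v.2| :=
  lt_of_not_ge fun h => hv (mem_closure_quad_of_abs_le h)

lemma fst_sub_mul_snd_pos {p : ℝ × ℝ} (hp : p ∈ Quad) {e : ℝ} (he : |e| ≤ 1) :
    0 < p.1 - e * p.2 := by
  have hp' : |p.2| < p.1 := hp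
  have : |e * p.2| ≤ |p.2| := by
    rw [abs_mul]
    exact mul_le_of_le_one_left (abs_nonneg _) he
  linarith [le_abs_self (e * p.2)]

lemma hitSign_mul_snd_sub_fst_pos {p v : ℝ × ℝ} (hp : p ∈ Quad) (hv : v.1 < |v.2|) :
    0 < hitSign p v * v.2 - v.1 := by
  have hp' := abs_lt.mp (show |p.2| < p.1 from hp)
  rcases lt_trichotomy (p.1 * v.2 - p.2 * v.1) 0 with hs | hs | hs
  · rw [hitSign, Real.sign_of_neg hs]
    rcases abs_cases v.2 with ⟨hv2, _⟩ | ⟨hv2, _⟩ <;> nlinarith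
  · rw [hitSign, hs, Real.sign_zero]
    rcases abs_cases v.2 with ⟨hv2, _⟩ | ⟨hv2, _⟩ <;> nlinarith
  · rw [hitSign, Real.sign_of_pos hs]
    rcases abs_cases v.2 with ⟨hv2, _⟩ | ⟨hv2, _⟩ <;> nlinarith

lemma exitTime_pos {p v : ℝ × ℝ} (hp : p ∈ Quad) (hv : v.1 < |v.2|) : 0 < exitTime p v :=
  div_pos (fst_sub_mul_snd_pos hp (abs_hitSign_le_one p v)) (hitSign_mul_snd_sub_fst_pos hp hv)

lemma exitTime_eq_of_parallel {p v : ℝ × ℝ} (hpv : p.1 * v.2 - p.2 * v.1 = 0)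
    (hv : v.1 ≠ 0) {e : ℝ} (he : p.1 - e * p.2 ≠ 0) :
    exitTime p v = (p.1 - e * p.2) / (e * v.2 - v.1) := by
  have hcross : p.1 * (e * v.2 - v.1) = -v.1 * (p.1 - e * p.2) := by linear_combination e * hpv
  have hD : e * v.2 - v.1 ≠ 0 := fun h =>
    mul_ne_zero (neg_ne_zero.mpr hv) he (by rw [← hcross, h, mul_zero])
  rw [exitTime, hitSign, hpv, Real.sign_zero, zero_mul, sub_zero, zero_mul, zero_sub,
    div_eq_div_iff (neg_ne_zero.mpr hv) hD, hcross]
  ring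

lemma exitTime_eq_of_side {p v : ℝ × ℝ} (hp : p ∈ Quad) (hv : v.1 < |v.2|) {e : ℝ}
    (he : |e| ≤ 1) (hside : e = hitSign p v ∨ exitCoord p v = 0) :
    exitTime p v = (p.1 - e * p.2) / (e * v.2 - v.1) := by
  rcases hside with rfl | hξ
  · rfl
  have hpv : p.1 * v.2 - p.2 * v.1 = 0 :=
    (div_eq_zero_iff.mp hξ).resolve_right (hitSign_mul_snd_sub_fst_pos hp hv).ne'
  have hv₁ : v.1 ≠ 0 := by
    have := hitSign_mul_snd_sub_fst_pos hp hv
    rw [hitSign, hpv, Real.sign_zero] at this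
    linarith
  exact exitTime_eq_of_parallel hpv hv₁ (fst_sub_mul_snd_pos hp he).ne'

theorem exit_time_continuity_estimate_general (p v p' v' : ℝ × ℝ) (δ : ℝ)
    (hp : p ∈ Quad) (hv : v ∉ closure Quad)
    (hside : hitSign p' v' = hitSign p v ∨ exitCoord p v = 0)
    (h1 : |p.1 - p'.1| < δ) (h2 : |p.2 - p'.2| < δ)
    (h3 : |v.1 - v'.1| < δ) (h4 : |v.2 - v'.2| < δ)
    (hδ2 : 2 * δ < |hitSign p' v' * v.2 - v.1|) :
    |exitTime p' v' - exitTime p v| ≤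
      2 * δ * (1 + exitTime p v) / (|hitSign p' v' * v.2 - v.1| - 2 * δ) := by
  set e := hitSign p' v'
  have he : |e| ≤ 1 := abs_hitSign_le_one p' v'
  have hv₀ := fst_lt_abs_snd_of_notMem_closure_quad hv
  have hN := fst_sub_mul_snd_pos hp he
  have hφ := exitTime_eq_of_side hp hv₀ he hside
  have hD : 0 < e * v.2 - v.1 :=
    (div_pos_iff_of_pos_left hN).mp (hφ ▸ exitTime_pos hp hv₀)
  have hD' : |(e * v'.2 - v'.1) - (e * v.2 - v.1)| ≤ 2 * δ := by
    rw [← abs_neg]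
    convert abs_sub_mul_sub_le he h3 h4 using 2
    ring
  rw [abs_of_pos hD] at hδ2 ⊢
  rw [hφ]
  -- `exitTime p' v'` unfolds to `N' / D'` since `e` is the hit side of `(p', v')`
  exact abs_div_sub_div_le hN.le hδ2 (abs_sub_mul_sub_le he h1 h2) hD'

theorem exit_time_continuity_estimate (p v p' v' : ℝ × ℝ) (δ : ℝ) (hδ : 0 < δ)
    (hp : p ∈ Quad) (hv : v ∉ closure Quad) (hp' : p' ∈ Quad) (hv' : v' ∉ closure Quad)
    (hside : hitSign p' v' = hitSign p v ∨ exitCoord p v = 0)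
    (h1 : |p.1 - p'.1| < δ) (h2 : |p.2 - p'.2| < δ)
    (h3 : |v.1 - v'.1| < δ) (h4 : |v.2 - v'.2| < δ)
    (hδ2 : 2 * δ < |hitSign p' v' * v.2 - v.1|) :
    |exitTime p' v' - exitTime p v| ≤
      2 * δ * (1 + exitTime p v) / (|hitSign p' v' * v.2 - v.1| - 2 * δ) :=
  exit_time_continuity_estimate_general p v p' v' δ hp hv hside h1 h2 h3 h4 hδ2
end

section
/- The map ξ: G_I → ℝ sending incomplete geodesic data (p,v) ∈ Q₄ × (closure(Q₄))ᶜ to the x-coordinate of its exit point, ξ(p,v) = (t·v_x - x·v_t)/(ε·v_x - v_t) with ε = sign(t·v_x - x·v_t), is continuous, open and surjective; consequently the quotient of G_I by the relation ξ(γ₁) = ξ(γ₂) is homeomorphic to ℝ. -/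
/-- The set G_I of incomplete geodesic data of Q₄: initial point in Q₄ and velocity outside
the closure of Q₄, with the subspace topology from ℝ⁴. -/
def GI : Type := {x : (ℝ × ℝ) × (ℝ × ℝ) // x.1 ∈ Quad ∧ x.2 ∉ closure Quad}

instance : TopologicalSpace GI := instTopologicalSpaceSubtype

/-- The x-coordinate of the exit point of an incomplete geodesic. -/
noncomputable def exitXi (g : GI) : ℝ :=
  let t := g.val.1.1; let x := g.val.1.2; let vt := g.val.2.1; let vx := g.val.2.2
  let ε : ℝ := Real.sign (t * vx - x * vt)
  (t * vx - x * vt) / (ε * vx - vt)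


/-!
A datum `(p, v)` leaves `Q₄` along `s ↦ p + s • v` through exactly one boundary point `(|ξ|, ξ)`,
and `exitXi` is the solution `ξ` of this linear problem. On each of the closed halves
`0 ≤ p × v` and `p × v ≤ 0` of `G_I` (planar cross product) it is a quotient with a positive
denominator, hence continuous. Conversely, for a fixed base point `p`, `u ↦ (p, (|u|, u) - p)` is a continuous section of `exitXi`,
and a rescaling of the velocity makes it pass through any prescribed datum; so `exitXi` is open,
hence a quotient map, and `G_I` modulo its fibres is `ℝ`.
-/

open Filter Topology

lemma closure_quad : closure Quad = {p : ℝ × ℝ | |p.2| ≤ p.1} := by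
  refine (closure_lt_subset_le (by fun_prop) (by fun_prop)).antisymm fun p hp => ?_
  have hlim : Tendsto (fun ε : ℝ => (p.1 + ε, p.2)) (𝓝[>] 0) (𝓝 p) := by
    have h : Continuous fun ε : ℝ => (p.1 + ε, p.2) := by fun_prop
    simpa using (h.tendsto 0).mono_left nhdsWithin_le_nhds
  refine mem_closure_of_tendsto hlim (eventually_nhdsWithin_of_forall fun ε hε => ?_)
  have hp' : |p.2| ≤ p.1 := hp
  show |p.2| < p.1 + ε
  linarith [Set.mem_Ioi.mp hε]

lemma notMem_closure_quad_iff {v : ℝ × ℝ} : v ∉ closure Quad ↔ v.1 < |v.2| := by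
  simp [closure_quad]

lemma lt_of_cross_nonneg {t x vt vx : ℝ} (hp : |x| < t) (hv : vt < |vx|)
    (hD : 0 ≤ t * vx - x * vt) : vt < vx := by
  by_contra! hle
  obtain ⟨hvx, hvt⟩ : vx < 0 ∧ |vt| ≤ -vx := by
    rcases lt_abs.mp hv with h | h
    · exact absurd h (not_lt.mpr hle)
    · exact ⟨by linarith [abs_nonneg vt], abs_le.mpr ⟨by linarith, by linarith⟩⟩
  have : -(x * vt) < -(t * vx) := calc
    -(x * vt) ≤ |x| * |vt| := by rw [← abs_mul]; exact neg_le_abs _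
    _ ≤ |x| * -vx := by gcongr
    _ < t * -vx := by gcongr; linarith
    _ = -(t * vx) := by ring
  linarith

lemma lt_neg_of_cross_nonpos {t x vt vx : ℝ} (hp : |x| < t) (hv : vt < |vx|)
    (hD : t * vx - x * vt ≤ 0) : vt < -vx :=
  lt_of_cross_nonneg (x := -x) (vx := -vx) (by simpa using hp) (by simpa using hv) (by linarith)

namespace GI

lemma abs_base_snd_lt_fst (g : GI) : |g.val.1.2| < g.val.1.1 := g.prop.1

lemma vel_fst_lt_abs_snd (g : GI) : g.val.2.1 < |g.val.2.2| := notMem_closure_quad_iff.mp g.prop.2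

def cross (g : GI) : ℝ := g.val.1.1 * g.val.2.2 - g.val.1.2 * g.val.2.1

lemma continuous_cross : Continuous cross := by
  unfold cross; fun_prop

lemma sub_pos_of_cross_nonneg (g : GI) (h : 0 ≤ g.cross) : 0 < g.val.2.2 - g.val.2.1 :=
  sub_pos.mpr (lt_of_cross_nonneg g.abs_base_snd_lt_fst g.vel_fst_lt_abs_snd h)

lemma neg_sub_pos_of_cross_nonpos (g : GI) (h : g.cross ≤ 0) : 0 < -g.val.2.2 - g.val.2.1 :=
  sub_pos.mpr (lt_neg_of_cross_nonpos g.abs_base_snd_lt_fst g.vel_fst_lt_abs_snd h)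

end GI

lemma exitXi_eq_of_cross_nonneg (g : GI) (h : 0 ≤ g.cross) :
    exitXi g = g.cross / (g.val.2.2 - g.val.2.1) := by
  show g.cross / (Real.sign g.cross * g.val.2.2 - g.val.2.1) = _
  rcases h.eq_or_lt with h0 | hpos
  · simp [← h0]
  · rw [Real.sign_of_pos hpos, one_mul]

lemma exitXi_eq_of_cross_nonpos (g : GI) (h : g.cross ≤ 0) :
    exitXi g = g.cross / (-g.val.2.2 - g.val.2.1) := by
  show g.cross / (Real.sign g.cross * g.val.2.2 - g.val.2.1) = _
  rcases h.eq_or_lt with h0 | hneg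
  · simp [h0]
  · rw [Real.sign_of_neg hneg, neg_one_mul]

lemma continuous_exitXi : Continuous exitXi := by
  have hsplit : exitXi = fun g => if GI.cross g ≤ 0 then GI.cross g / (-g.val.2.2 - g.val.2.1)
      else GI.cross g / (g.val.2.2 - g.val.2.1) := by
    funext g
    split_ifs with h
    · exact exitXi_eq_of_cross_nonpos g h
    · exact exitXi_eq_of_cross_nonneg g (not_le.mp h).le
  rw [hsplit]
  refine continuous_if_le GI.continuous_cross continuous_const ?_ ?_ fun g h => by simp [h]
  · exact GI.continuous_cross.continuousOn.div (by fun_prop)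
      fun g hg => (g.neg_sub_pos_of_cross_nonpos hg).ne'
  · exact GI.continuous_cross.continuousOn.div (by fun_prop)
      fun g hg => (g.sub_pos_of_cross_nonneg hg).ne'

lemma exists_add_smul_eq_exit (g : GI) :
    ∃ s : ℝ, 0 < s ∧ g.val.1 + s • g.val.2 = (|exitXi g|, exitXi g) := by
  obtain ⟨hx₁, hx₂⟩ := abs_lt.mp g.abs_base_snd_lt_fst
  rcases le_total 0 g.cross with h | h
  · have hden := g.sub_pos_of_cross_nonneg h
    have hξ := exitXi_eq_of_cross_nonneg g h
    refine ⟨(g.val.1.1 - g.val.1.2) / (g.val.2.2 - g.val.2.1), div_pos (by linarith) hden, ?_⟩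
    rw [abs_of_nonneg (hξ ▸ div_nonneg h hden.le), hξ, GI.cross]
    ext <;> simp <;> field_simp <;> ring
  · have hden := g.neg_sub_pos_of_cross_nonpos h
    have hξ := exitXi_eq_of_cross_nonpos g h
    refine ⟨(g.val.1.1 + g.val.1.2) / (-g.val.2.2 - g.val.2.1), div_pos (by linarith) hden, ?_⟩
    rw [abs_of_nonpos (hξ ▸ div_nonpos_of_nonpos_of_nonneg h hden.le), hξ, GI.cross]
    ext <;> simp <;> field_simp <;> ring

lemma exitXi_eq_of_add_smul_eq (g : GI) {s u : ℝ} (hs : 0 < s)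
    (h : g.val.1 + s • g.val.2 = (|u|, u)) : exitXi g = u := by
  obtain ⟨ht, hx⟩ := Prod.ext_iff.mp h
  simp only [Prod.fst_add, Prod.snd_add, Prod.smul_fst, Prod.smul_snd, smul_eq_mul] at ht hx
  obtain ⟨hx₁, hx₂⟩ := abs_lt.mp g.abs_base_snd_lt_fst
  rcases le_total 0 u with hu | hu
  · rw [abs_of_nonneg hu] at ht
    have hcross : s * g.cross = u * (g.val.1.1 - g.val.1.2) := by
      unfold GI.cross; linear_combination g.val.1.1 * hx - g.val.1.2 * ht
    have hnonneg : 0 ≤ g.cross := nonneg_of_mul_nonneg_right (hcross ▸ by nlinarith) hs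
    have hden := g.sub_pos_of_cross_nonneg hnonneg
    rw [exitXi_eq_of_cross_nonneg g hnonneg, div_eq_iff hden.ne']
    refine mul_left_cancel₀ hs.ne' ?_
    linear_combination hcross - u * hx + u * ht
  · rw [abs_of_nonpos hu] at ht
    have hcross : s * g.cross = u * (g.val.1.1 + g.val.1.2) := by
      unfold GI.cross; linear_combination g.val.1.1 * hx - g.val.1.2 * ht
    have hnonpos : g.cross ≤ 0 := nonpos_of_mul_nonpos_right (hcross ▸ by nlinarith) hs
    have hden := g.neg_sub_pos_of_cross_nonpos hnonpos
    rw [exitXi_eq_of_cross_nonpos g hnonpos, div_eq_iff hden.ne']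
    refine mul_left_cancel₀ hs.ne' ?_
    linear_combination hcross + u * hx + u * ht

lemma smul_sub_notMem_closure_quad {p : ℝ × ℝ} (hp : p ∈ Quad) {c : ℝ} (hc : 0 < c) (u : ℝ) :
    c • ((|u|, u) - p) ∉ closure Quad := by
  rw [notMem_closure_quad_iff]
  simp only [Prod.smul_fst, Prod.smul_snd, Prod.fst_sub, Prod.snd_sub, smul_eq_mul, abs_mul,
    abs_of_pos hc]
  have : |u| - |p.2| ≤ |u - p.2| := abs_sub_abs_le_abs_sub u p.2
  have hp' : |p.2| < p.1 := hp
  gcongr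
  linarith

def exitSection (p : ℝ × ℝ) (hp : p ∈ Quad) (c : ℝ) (hc : 0 < c) (u : ℝ) : GI :=
  ⟨(p, c • ((|u|, u) - p)), hp, smul_sub_notMem_closure_quad hp hc u⟩

lemma continuous_exitSection (p : ℝ × ℝ) (hp : p ∈ Quad) (c : ℝ) (hc : 0 < c) :
    Continuous (exitSection p hp c hc) :=
  Continuous.subtype_mk (by fun_prop) _

lemma exitXi_exitSection (p : ℝ × ℝ) (hp : p ∈ Quad) (c : ℝ) (hc : 0 < c) (u : ℝ) :
    exitXi (exitSection p hp c hc u) = u :=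
  exitXi_eq_of_add_smul_eq _ (inv_pos.mpr hc) (by simp [exitSection, smul_smul, hc.ne'])

lemma isOpenMap_exitXi : IsOpenMap exitXi := by
  refine IsOpenMap.of_sections fun g => ?_
  obtain ⟨s, hs, hexit⟩ := exists_add_smul_eq_exit g
  refine ⟨exitSection g.val.1 g.prop.1 s⁻¹ (inv_pos.mpr hs),
    (continuous_exitSection ..).continuousAt, ?_, fun u => exitXi_exitSection _ _ _ _ u⟩
  refine Subtype.ext (Prod.ext rfl ?_)
  simp [exitSection, ← hexit, smul_smul, hs.ne']

lemma surjective_exitXi : Function.Surjective exitXi :=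
  Function.RightInverse.surjective
    (exitXi_exitSection (1, 0) (show |(0 : ℝ)| < 1 by norm_num) 1 one_pos)

theorem gboundary_of_quadrant_is_R :
    Continuous exitXi ∧ IsOpenMap exitXi ∧ Function.Surjective exitXi ∧
    Nonempty (Quot (fun a b : GI => exitXi a = exitXi b) ≃ₜ ℝ) := by
  have hquot : Topology.IsQuotientMap (⟨exitXi, continuous_exitXi⟩ : C(GI, ℝ)) :=
    isOpenMap_exitXi.isQuotientMap continuous_exitXi surjective_exitXi
  exact ⟨continuous_exitXi, isOpenMap_exitXi, surjective_exitXi, ⟨hquot.homeomorph⟩⟩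
end
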